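/- arXiv:2001.01712 — 2 statements merged into one kernel-verified Lean document; each statement's English description precedes it below -/
import Mathlib

section
/- Let A be an admissible matrix field on ℝⁿ with an invariant measure r, and let (v^{kl}, ā_{kl}) be a corrector pair for A for some fixed k,l ∈ {1,…,n}. Then ā_{kl} = ∫_{[0,1]ⁿ} a_{kl}(y) r(y) dy. -/
open MeasureTheory

/-- The unit cube `[0,1]^n` in `ℝ^n`. -/
def unitCube (n : ℕ) : Set (Fin n → ℝ) := Set.Icc 0 1

/-- Partial derivative `∂_{y_i} f`. -/
noncomputable def pd {n : ℕ} (f : (Fin n → ℝ) → ℝ) (i : Fin n) : (Fin n → ℝ) → ℝ :=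
  fun y => fderiv ℝ f y (Pi.single i 1)

/-- Second partial derivative `∂_{y_i} ∂_{y_j} f`. -/
noncomputable def pd2 {n : ℕ} (f : (Fin n → ℝ) → ℝ) (i j : Fin n) : (Fin n → ℝ) → ℝ :=
  pd (pd f j) i

/-- Third partial derivative `∂_{y_i} ∂_{y_j} ∂_{y_k} f`. -/
noncomputable def pd3 {n : ℕ} (f : (Fin n → ℝ) → ℝ) (i j k : Fin n) : (Fin n → ℝ) → ℝ :=
  pd (pd (pd f k) j) i

/-- `ℤ^n`-periodicity. -/
def ZPeriodic {n : ℕ} (f : (Fin n → ℝ) → ℝ) : Prop :=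
  ∀ (y : Fin n → ℝ) (z : Fin n → ℤ), f (y + fun i => (z i : ℝ)) = f y

/-- Admissible matrix field: C², periodic, symmetric, uniformly elliptic. -/
def IsAdmissible {n : ℕ} (a : Fin n → Fin n → (Fin n → ℝ) → ℝ) : Prop :=
  (∀ i j, ContDiff ℝ 2 (a i j)) ∧
  (∀ i j, ZPeriodic (a i j)) ∧
  (∀ i j y, a i j y = a j i y) ∧
  ∃ lam Lam : ℝ, 0 < lam ∧ lam ≤ Lam ∧
    ∀ (y ξ : Fin n → ℝ),
      lam * (∑ i, ξ i ^ 2) ≤ ∑ i, ∑ j, a i j y * ξ i * ξ j ∧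
      ∑ i, ∑ j, a i j y * ξ i * ξ j ≤ Lam * (∑ i, ξ i ^ 2)

/-- Corrector pair `(v^{kl}, ā_{kl})`. -/
def IsCorrector {n : ℕ} (a : Fin n → Fin n → (Fin n → ℝ) → ℝ)
    (k l : Fin n) (v : (Fin n → ℝ) → ℝ) (abar : ℝ) : Prop :=
  ContDiff ℝ 2 v ∧ ZPeriodic v ∧
  ∀ y, -(∑ i, ∑ j, a i j y * pd2 v i j y) - a k l y = -abar

/-- Invariant measure for the matrix field `a`. -/
def IsInvariantMeasure {n : ℕ} (a : Fin n → Fin n → (Fin n → ℝ) → ℝ)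
    (r : (Fin n → ℝ) → ℝ) : Prop :=
  ContDiff ℝ 2 r ∧ ZPeriodic r ∧ (∀ y, 0 < r y) ∧
  (∀ y, ∑ i, ∑ j, pd2 (fun x => a i j x * r x) i j y = 0) ∧
  ∫ y in unitCube n, r y = 1

/-- `u` is Cᵐ on a neighborhood of the closure of `U`, with all partial
derivatives up to order `m` bounded there. -/
def SmoothBounded {n : ℕ} (m : ℕ) (U : Set (Fin n → ℝ)) (u : (Fin n → ℝ) → ℝ) : Prop :=
  ∃ V : Set (Fin n → ℝ), IsOpen V ∧ closure U ⊆ V ∧ ContDiffOn ℝ m u V ∧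
    ∀ k : ℕ, k ≤ m → ∃ M : ℝ, ∀ x ∈ V, ‖iteratedFDerivWithin ℝ k u V x‖ ≤ M

/-!
Put `b_{ij} = a_{ij} r`. The flux `F_i = ∑_j (b_{ij} ∂_j v - v ∂_j b_{ij})` is `ℤⁿ`-periodic, so by
the divergence theorem its divergence integrates to zero over the unit cube (the contributions of
opposite faces cancel). Since `b` is symmetric, the first-order terms of that divergence cancel
and it equals `∑ b_{ij} ∂_i ∂_j v - v ∑ ∂_i ∂_j b_{ij}`. The invariance equation kills the second
sum and the corrector equation turns the first into `(ā_{kl} - a_{kl}) r`; integrating and using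
`∫ r = 1` gives the claim.
-/

section

variable {n : ℕ}

theorem ZPeriodic.add_single {f : (Fin n → ℝ) → ℝ} (hf : ZPeriodic f) (y : Fin n → ℝ)
    (i : Fin n) : f (y + Pi.single i 1) = f y := by
  convert hf y (Pi.single i 1) using 3
  ext j
  rcases eq_or_ne j i with rfl | hj <;> simp [*]

theorem ZPeriodic.mul {f g : (Fin n → ℝ) → ℝ} (hf : ZPeriodic f) (hg : ZPeriodic g) :
    ZPeriodic fun y => f y * g y := fun y z => by simp only [hf y z, hg y z]

theorem ZPeriodic.pd {f : (Fin n → ℝ) → ℝ} (hf : ZPeriodic f) (i : Fin n) : ZPeriodic (pd f i) := by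
  intro y z
  have hshift : (fun x => f (x + fun j => (z j : ℝ))) = f := funext fun x => hf x z
  have := congrArg (fderiv ℝ · y) hshift
  simp only [fderiv_comp_add_right] at this
  simp only [_root_.pd, this]

theorem ContDiff.pd {m : ℕ} {f : (Fin n → ℝ) → ℝ} (hf : ContDiff ℝ (m + 1) f) (i : Fin n) :
    ContDiff ℝ m (pd f i) :=
  (hf.fderiv_right (by norm_cast)).clm_apply contDiff_const

theorem ContDiff.continuous_pd2 {f : (Fin n → ℝ) → ℝ} (hf : ContDiff ℝ 2 f) (i j : Fin n) :
    Continuous (pd2 f i j) :=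
  ((hf.pd (m := 1) j).pd (m := 0) i).continuous

theorem pd_mul {f g : (Fin n → ℝ) → ℝ} {x : Fin n → ℝ} (hf : DifferentiableAt ℝ f x)
    (hg : DifferentiableAt ℝ g x) (i : Fin n) :
    pd (fun y => f y * g y) i x = pd f i x * g x + f x * pd g i x := by
  simp only [pd, fderiv_fun_mul hf hg, add_apply, smul_apply, smul_eq_mul]
  ring

theorem pd_sub {f g : (Fin n → ℝ) → ℝ} {x : Fin n → ℝ} (hf : DifferentiableAt ℝ f x)
    (hg : DifferentiableAt ℝ g x) (i : Fin n) :
    pd (fun y => f y - g y) i x = pd f i x - pd g i x := by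
  simp [pd, fderiv_fun_sub hf hg]

theorem pd_sum {ι : Type*} {s : Finset ι} {F : ι → (Fin n → ℝ) → ℝ} {x : Fin n → ℝ}
    (h : ∀ j ∈ s, DifferentiableAt ℝ (F j) x) (i : Fin n) :
    pd (fun y => ∑ j ∈ s, F j y) i x = ∑ j ∈ s, pd (F j) i x := by
  simp [pd, fderiv_fun_sum h]

theorem Fin.insertNth_eq_insertNth_zero_add_single {M : Type*} [AddZeroClass M] {m : ℕ}
    (i : Fin (m + 1)) (c : M) (x : Fin m → M) :
    Fin.insertNth (α := fun _ => M) i c x =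
      Fin.insertNth (α := fun _ => M) i 0 x + Pi.single i c := by
  ext j
  rcases eq_or_ne j i with rfl | hj
  · simp
  · obtain ⟨j, rfl⟩ := Fin.exists_succAbove_eq hj
    simp [hj]

theorem Continuous.integrableOn_unitCube {f : (Fin n → ℝ) → ℝ} (hf : Continuous f) :
    IntegrableOn f (unitCube n) :=
  hf.continuousOn.integrableOn_compact isCompact_Icc

theorem integral_unitCube_sum_pd_eq_zero {G : Fin n → (Fin n → ℝ) → ℝ}
    (hG : ∀ i, ContDiff ℝ 1 (G i)) (hper : ∀ i, ZPeriodic (G i)) :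
    ∫ y in unitCube n, ∑ i, pd (G i) i y = 0 := by
  cases n with
  | zero => simp
  | succ m =>
    have hint : IntegrableOn (fun y => ∑ i, fderiv ℝ (G i) y (Pi.single i 1)) (unitCube (m + 1)) :=
      (continuous_finsetSum _ fun i _ => ((hG i).pd (m := 0) i).continuous).integrableOn_unitCube
    change ∫ y in Set.Icc 0 1, ∑ i, fderiv ℝ (G i) y (Pi.single i 1) = 0
    rw [integral_divergence_of_hasFDerivAt_off_countable' 0 1 zero_le_one G
      (fun i y => fderiv ℝ (G i) y) ∅ Set.countable_empty (fun i => (hG i).continuous.continuousOn)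
      (fun y _ i => ((hG i).differentiable one_ne_zero y).hasFDerivAt) hint]
    refine Finset.sum_eq_zero fun i _ => sub_eq_zero.mpr ?_
    simp only [Pi.one_apply, Pi.zero_apply, (hper i).add_single,
      Fin.insertNth_eq_insertNth_zero_add_single (c := (1 : ℝ))]

noncomputable def flux (b : Fin n → Fin n → (Fin n → ℝ) → ℝ) (v : (Fin n → ℝ) → ℝ) (i : Fin n)
    (y : Fin n → ℝ) : ℝ :=
  ∑ j, (b i j y * pd v j y - v y * pd (b i j) j y)

section Flux

variable {b : Fin n → Fin n → (Fin n → ℝ) → ℝ} {v : (Fin n → ℝ) → ℝ}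

theorem contDiff_flux (hb : ∀ i j, ContDiff ℝ 2 (b i j)) (hv : ContDiff ℝ 2 v) (i : Fin n) :
    ContDiff ℝ 1 (flux b v i) :=
  ContDiff.sum fun j _ =>
    (((hb i j).of_le one_le_two).mul (hv.pd j)).sub ((hv.of_le one_le_two).mul ((hb i j).pd j))

theorem zPeriodic_flux (hb : ∀ i j, ZPeriodic (b i j)) (hv : ZPeriodic v) (i : Fin n) :
    ZPeriodic (flux b v i) := fun y z => by
  simp only [flux, hb i _ y z, hv y z, hv.pd _ y z, (hb i _).pd _ y z]

theorem sum_pd_flux (hb : ∀ i j, ContDiff ℝ 2 (b i j)) (hsymm : ∀ i j, b i j = b j i)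
    (hv : ContDiff ℝ 2 v) (x : Fin n → ℝ) :
    ∑ i, pd (flux b v i) i x =
      ∑ i, ∑ j, b i j x * pd2 v i j x - v x * ∑ i, ∑ j, pd2 (b i j) i j x := by
  have hdiff {f : (Fin n → ℝ) → ℝ} (hf : ContDiff ℝ 1 f) : DifferentiableAt ℝ f x :=
    hf.differentiable one_ne_zero x
  have hb1 (i j : Fin n) : ContDiff ℝ 1 (b i j) := (hb i j).of_le one_le_two
  have hv1 : ContDiff ℝ 1 v := hv.of_le one_le_two
  have hpd_flux (i : Fin n) : pd (flux b v i) i x = ∑ j, (pd (b i j) i x * pd v j x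
      + b i j x * pd2 v i j x - (pd v i x * pd (b i j) j x + v x * pd2 (b i j) i j x)) := by
    unfold flux
    rw [pd_sum fun j _ => hdiff (((hb1 i j).mul (hv.pd j)).sub (hv1.mul ((hb i j).pd j)))]
    refine Finset.sum_congr rfl fun j _ => ?_
    rw [pd_sub (hdiff ((hb1 i j).mul (hv.pd j))) (hdiff (hv1.mul ((hb i j).pd j))),
      pd_mul (hdiff (hb1 i j)) (hdiff (hv.pd j)), pd_mul (hdiff hv1) (hdiff ((hb i j).pd j))]
    rfl
  have hcross : ∑ i, ∑ j, pd (b i j) i x * pd v j x = ∑ i, ∑ j, pd v i x * pd (b i j) j x := by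
    rw [Finset.sum_comm]
    simp_rw [hsymm _ _, mul_comm]
  simp only [hpd_flux, Finset.sum_sub_distrib, Finset.sum_add_distrib, Finset.mul_sum, hcross]
  ring

theorem integral_unitCube_sum_mul_pd2 (hb : ∀ i j, ContDiff ℝ 2 (b i j))
    (hper : ∀ i j, ZPeriodic (b i j)) (hsymm : ∀ i j, b i j = b j i) (hv : ContDiff ℝ 2 v)
    (hvper : ZPeriodic v) :
    ∫ y in unitCube n, ∑ i, ∑ j, b i j y * pd2 v i j y =
      ∫ y in unitCube n, v y * ∑ i, ∑ j, pd2 (b i j) i j y := by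
  have hdiv := integral_unitCube_sum_pd_eq_zero (contDiff_flux hb hv) (zPeriodic_flux hper hvper)
  simp only [sum_pd_flux hb hsymm hv] at hdiv
  rwa [integral_sub, sub_eq_zero] at hdiv
  · exact Continuous.integrableOn_unitCube <| continuous_finsetSum _ fun i _ =>
      continuous_finsetSum _ fun j _ => (hb i j).continuous.mul (hv.continuous_pd2 i j)
  · exact Continuous.integrableOn_unitCube <| hv.continuous.mul <| continuous_finsetSum _
      fun i _ => continuous_finsetSum _ fun j _ => (hb i j).continuous_pd2 i j

end Flux

end

/-- the effective coefficient is the average of `a_{kl}` against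
the invariant measure: `ā_{kl} = ∫_{[0,1]ⁿ} a_{kl} r`. -/
theorem effective_coeff_eq_average {n : ℕ}
    (a : Fin n → Fin n → (Fin n → ℝ) → ℝ) (hA : IsAdmissible a)
    (r : (Fin n → ℝ) → ℝ) (hr : IsInvariantMeasure a r)
    (k l : Fin n) (v : (Fin n → ℝ) → ℝ) (abar : ℝ)
    (hcorr : IsCorrector a k l v abar) :
    abar = ∫ y in unitCube n, a k l y * r y := by
  obtain ⟨ha, haper, hasymm, -⟩ := hA
  obtain ⟨hr, hrper, -, hinv, hrint⟩ := hr
  obtain ⟨hv, hvper, hcorr⟩ := hcorr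
  have hadj := integral_unitCube_sum_mul_pd2 (b := fun i j y => a i j y * r y)
    (fun i j => (ha i j).mul hr) (fun i j => (haper i j).mul hrper)
    (fun i j => funext fun y => by rw [hasymm]) hv hvper
  have hcorr_mul (y : Fin n → ℝ) :
      ∑ i, ∑ j, a i j y * r y * pd2 v i j y = abar * r y - a k l y * r y := by
    simp_rw [mul_right_comm _ (r y), ← Finset.sum_mul]
    linear_combination (-r y) * hcorr y
  simp only [hinv, hcorr_mul, mul_zero, integral_zero] at hadj
  have hint {f : (Fin n → ℝ) → ℝ} (hf : Continuous f) :
      IntegrableOn (fun y => f y * r y) (unitCube n) :=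
    (hf.mul hr.continuous).integrableOn_unitCube
  rw [integral_sub (hint continuous_const) (hint (ha k l).continuous), integral_const_mul,
    hrint] at hadj
  linarith
end

section
/- Let α : ℝ² → (0,∞) be C² and ℤ²-periodic, and let r⁰ : ℝ² → (0,∞) be C³ and ℤ²-periodic with −∂²_{y₁} r⁰ − ∂²_{y₂}(α r⁰) = 0 on ℝ². Let s > 0 satisfy s·|∂³_{y₁} r⁰(y) + α(y) ∂_{y₁}∂²_{y₂} r⁰(y)| ≤ 1/2 for all y ∈ ℝ². Define v := s ∂_{y₁} r⁰, w := 1 + ∂²_{y₁} v + α ∂²_{y₂} v, a₁ := 1/w, a₂ := α a₁, and r := r⁰/a₁ = w r⁰. Then 1/2 ≤ w ≤ 3/2 on ℝ², and: (i) −a₁(y) ∂²_{y₁} v(y) − a₂(y) ∂²_{y₂} v(y) − a₁(y) = −1 for all y ∈ ℝ² (i.e. v solves the (1,1)-cell problem for A = diag(a₁, a₂) with effective constant ā₁₁ = 1); and (ii) ∂²_{y₁}(a₁(y) r(y)) + ∂²_{y₂}(a₂(y) r(y)) = 0 for all y ∈ ℝ² (i.e. r satisfies the invariant-measure equation for A =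 diag(a₁, a₂)). -/
open MeasureTheory

/-!
The second derivatives of `v = s ∂₁r⁰` are `s` times third derivatives of `r⁰`; commuting
partial derivatives gives `w = 1 + s (∂₁³r⁰ + α ∂₁∂₂²r⁰)`, which the smallness of `s` pins to
`[1/2, 3/2]`. The cell equation is then `-w⁻¹ w = -1`, and since `a₁ r = r⁰` and `a₂ r = α r⁰`,
the invariant-measure equation is the equation of `r⁰`.
-/

section PartialDerivatives

variable {n : ℕ}

lemma pd_eq_comp_fderiv (f : (Fin n → ℝ) → ℝ) (i : Fin n) :
    pd f i = ContinuousLinearMap.apply ℝ ℝ (Pi.single i 1 : Fin n → ℝ) ∘ fderiv ℝ f :=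
  rfl

lemma pd_contDiff {f : (Fin n → ℝ) → ℝ} {m k : ℕ} (hf : ContDiff ℝ k f) (h : m + 1 ≤ k)
    (i : Fin n) : ContDiff ℝ m (pd f i) := by
  rw [pd_eq_comp_fderiv]
  exact (ContinuousLinearMap.apply ℝ ℝ _).contDiff.comp
    (hf.fderiv_right (m := m) (by exact_mod_cast h))

lemma pd_const_smul (c : ℝ) (f : (Fin n → ℝ) → ℝ) (i : Fin n) :
    pd (c • f) i = c • pd f i := by
  ext y
  simp [pd, fderiv_const_smul_field]

lemma pd2_const_smul (c : ℝ) (f : (Fin n → ℝ) → ℝ) (i j : Fin n) :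
    pd2 (c • f) i j = c • pd2 f i j := by
  simp only [pd2, pd_const_smul]

lemma pd2_eq_fderiv_fderiv {f : (Fin n → ℝ) → ℝ} {y : Fin n → ℝ}
    (hf : DifferentiableAt ℝ (fderiv ℝ f) y) (i j : Fin n) :
    pd2 f i j y = fderiv ℝ (fderiv ℝ f) y (Pi.single i 1) (Pi.single j 1) := by
  rw [pd2, pd, pd_eq_comp_fderiv,
    ((ContinuousLinearMap.apply ℝ ℝ _).hasFDerivAt.comp y hf.hasFDerivAt).fderiv]
  simp

lemma pd2_comm {f : (Fin n → ℝ) → ℝ} (hf : ContDiff ℝ 2 f) (i j : Fin n) :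
    pd2 f i j = pd2 f j i := by
  ext y
  have hf' : DifferentiableAt ℝ (fderiv ℝ f) y :=
    (hf.fderiv_right (m := 1) le_rfl).differentiable one_ne_zero y
  rw [pd2_eq_fderiv_fderiv hf', pd2_eq_fderiv_fderiv hf']
  exact hf.contDiffAt.isSymmSndFDerivAt (by simp) _ _

lemma pd3_comm_inner {f : (Fin n → ℝ) → ℝ} (hf : ContDiff ℝ 2 f) (i j k : Fin n) :
    pd3 f i j k = pd3 f i k j :=
  congrArg (pd · i) (pd2_comm hf j k)

lemma pd3_comm_outer {f : (Fin n → ℝ) → ℝ} (hf : ContDiff ℝ 3 f) (i j k : Fin n) :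
    pd3 f i j k = pd3 f j i k :=
  pd2_comm (pd_contDiff hf le_rfl k) i j

end PartialDerivatives

lemma one_add_mul_mem_Icc {s x : ℝ} (hs : 0 < s) (hx : s * |x| ≤ 1 / 2) :
    1 / 2 ≤ 1 + s * x ∧ 1 + s * x ≤ 3 / 2 := by
  have hle := mul_le_mul_of_nonneg_left (le_abs_self x) hs.le
  have hge := mul_le_mul_of_nonneg_left (neg_abs_le x) hs.le
  constructor <;> linarith

theorem explicit_construction_general
    (α : (Fin 2 → ℝ) → ℝ)
    (r0 : (Fin 2 → ℝ) → ℝ) (hr0C : ContDiff ℝ 3 r0)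
    (hr0pde : ∀ y, -(pd2 r0 0 0 y) - pd2 (fun x => α x * r0 x) 1 1 y = 0)
    (s : ℝ) (hs : 0 < s)
    (hsmall : ∀ y, s * |pd3 r0 0 0 0 y + α y * pd3 r0 0 1 1 y| ≤ 1 / 2)
    (v w a₁ a₂ r : (Fin 2 → ℝ) → ℝ)
    (hv : ∀ y, v y = s * pd r0 0 y)
    (hw : ∀ y, w y = 1 + pd2 v 0 0 y + α y * pd2 v 1 1 y)
    (ha₁ : ∀ y, a₁ y = (w y)⁻¹)
    (ha₂ : ∀ y, a₂ y = α y * a₁ y)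
    (hrdef : ∀ y, r y = w y * r0 y) :
    (∀ y, 1 / 2 ≤ w y ∧ w y ≤ 3 / 2) ∧
    (∀ y, -(a₁ y * pd2 v 0 0 y) - a₂ y * pd2 v 1 1 y - a₁ y = -1) ∧
    (∀ y, pd2 (fun x => a₁ x * r x) 0 0 y + pd2 (fun x => a₂ x * r x) 1 1 y = 0) := by
  have hv_eq : v = s • pd r0 0 := funext hv
  have hv11 : pd2 (pd r0 0) 1 1 = pd3 r0 0 1 1 :=
    (pd3_comm_inner (hr0C.of_le (by norm_num)) 1 1 0).trans (pd3_comm_outer hr0C 1 0 1)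
  have hw_eq : ∀ y, w y = 1 + s * (pd3 r0 0 0 0 y + α y * pd3 r0 0 1 1 y) := fun y => by
    rw [hw, hv_eq, pd2_const_smul, pd2_const_smul, hv11]
    simp only [Pi.smul_apply, smul_eq_mul, pd3, pd2]
    ring
  have hw_bounds : ∀ y, 1 / 2 ≤ w y ∧ w y ≤ 3 / 2 := fun y =>
    hw_eq y ▸ one_add_mul_mem_Icc hs (hsmall y)
  have hw_ne : ∀ y, w y ≠ 0 := fun y => by linarith [hw_bounds y]
  have ha₁r : (fun x => a₁ x * r x) = r0 := funext fun x => by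
    rw [ha₁, hrdef, inv_mul_cancel_left₀ (hw_ne x)]
  have ha₂r : (fun x => a₂ x * r x) = fun x => α x * r0 x := funext fun x => by
    rw [ha₂, mul_assoc, ← ha₁r]
  refine ⟨hw_bounds, fun y => ?_, fun y => ?_⟩
  · rw [ha₂, ha₁]
    field_simp [hw_ne y]
    linarith [hw y]
  · rw [ha₁r, ha₂r]
    linarith [hr0pde y]

/-- explicit construction from the first proof of
Proposition 3.1: the perturbed diagonal matrix `A = diag(a₁, a₂)` has cell
solution `v = s ∂_{y₁} r⁰` (with `ā₁₁ = 1`) and invariant density `r = w r⁰`. -/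
theorem explicit_construction
    (α : (Fin 2 → ℝ) → ℝ) (hαC : ContDiff ℝ 2 α) (hαper : ZPeriodic α)
    (hαpos : ∀ y, 0 < α y)
    (r0 : (Fin 2 → ℝ) → ℝ) (hr0C : ContDiff ℝ 3 r0) (hr0per : ZPeriodic r0)
    (hr0pos : ∀ y, 0 < r0 y)
    (hr0pde : ∀ y, -(pd2 r0 0 0 y) - pd2 (fun x => α x * r0 x) 1 1 y = 0)
    (s : ℝ) (hs : 0 < s)
    (hsmall : ∀ y, s * |pd3 r0 0 0 0 y + α y * pd3 r0 0 1 1 y| ≤ 1 / 2)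
    (v w a₁ a₂ r : (Fin 2 → ℝ) → ℝ)
    (hv : ∀ y, v y = s * pd r0 0 y)
    (hw : ∀ y, w y = 1 + pd2 v 0 0 y + α y * pd2 v 1 1 y)
    (ha₁ : ∀ y, a₁ y = (w y)⁻¹)
    (ha₂ : ∀ y, a₂ y = α y * a₁ y)
    (hrdef : ∀ y, r y = w y * r0 y) :
    (∀ y, 1 / 2 ≤ w y ∧ w y ≤ 3 / 2) ∧
    (∀ y, -(a₁ y * pd2 v 0 0 y) - a₂ y * pd2 v 1 1 y - a₁ y = -1) ∧
    (∀ y, pd2 (fun x => a₁ x * r x) 0 0 y + pd2 (fun x => a₂ x * r x) 1 1 y = 0) :=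
  explicit_construction_general α r0 hr0C hr0pde s hs hsmall v w a₁ a₂ r hv hw ha₁ ha₂ hrdef
end
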